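/- arXiv:2105.06561 — 2 statements merged into one kernel-verified Lean document; each statement's English description precedes it below -/
import Mathlib

section
/- In a Schelling game on a cycle with |T1| ≥ 2 and |T2| ≥ 2, in every swap-equilibrium every agent is adjacent to at least one agent of its own type. -/
open SimpleGraph

variable {V : Type*}

/-- Utility of the agent occupying vertex `v` in graph `H` under type assignment `τ`:
the fraction of same-type agents among occupied neighbors (0 if no neighbors). -/
noncomputable def utility (H : SimpleGraph V) (τ : V → Bool) (v : V) : ℚ := by
  classical
  exact if H.neighborSet v = ∅ then 0
    else ((H.neighborSet v ∩ {w | τ w = τ v}).ncard : ℚ) / ((H.neighborSet v).ncard : ℚ)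

/-- The type function after the agents on vertices `i` and `j` exchange their vertices. -/
noncomputable def swapAt (τ : V → Bool) (i j : V) : V → Bool := fun v => by
  classical
  exact if v = i then τ j else if v = j then τ i else τ v

/-- The swap of the (distinct-type) agents on `i` and `j` strictly increases both utilities. -/
def ProfitableSwap (H : SimpleGraph V) (τ : V → Bool) (i j : V) : Prop :=
  τ i ≠ τ j ∧
  utility H τ i < utility H (swapAt τ i j) j ∧
  utility H τ j < utility H (swapAt τ i j) i

/-- Swap-equilibrium: no profitable swap exists. -/
def IsSwapEq (H : SimpleGraph V) (τ : V → Bool) : Prop :=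
  ∀ i j : V, ¬ ProfitableSwap H τ i j

/-- The cycle graph on `Fin n` (vertices `0,…,n-1` in cyclic order). -/
def cycleG (n : ℕ) : SimpleGraph (Fin n) where
  Adj u v := u ≠ v ∧ ((u.val + 1) % n = v.val ∨ (v.val + 1) % n = u.val)
  symm := ⟨fun u v h => ⟨h.1.symm, h.2.symm⟩⟩
  loopless := ⟨fun u h => h.1 rfl⟩

/-!
If the agent at `v` has no neighbour of its own type, its utility is `0`. Walking forward from `v`
to the nearest other agent of its type, let `j` be the last agent of the opposite type before it.
If `j = v + 1`, swapping `v` and `v + 1` raises both utilities from `0` to `1/2`. Otherwise the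
agent at `j` has utility at most `1/2`, and at `v` it would be surrounded by its own type, while
the agent at `v` gains the same-type neighbour `j + 1`.
-/

open Fin.NatCast Fin.CommRing

theorem Nat.exists_not_and_succ_of_le {p : ℕ → Prop} {a b : ℕ} (hab : a ≤ b) (ha : ¬ p a)
    (hb : p b) : ∃ k, a ≤ k ∧ k < b ∧ ¬ p k ∧ p (k + 1) := by
  induction b, hab using Nat.le_induction with
  | base => exact absurd hb ha
  | succ b hab ih =>
    by_cases h : p b
    · obtain ⟨k, hak, hkb, hk⟩ := ih h
      exact ⟨k, hak, hkb.trans b.lt_succ_self, hk⟩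
    · exact ⟨b, hab, b.lt_succ_self, h, hb⟩

theorem Fin.natCast_ne_zero_of_pos_of_lt {n k : ℕ} [NeZero n] (h0 : 0 < k) (hk : k < n) :
    (k : Fin n) ≠ 0 :=
  fun h => absurd (Nat.le_of_dvd h0 (Fin.natCast_eq_zero.mp h)) (not_le.mpr hk)

section swapAt

variable (τ : V → Bool) (i j : V)

theorem swapAt_apply_left : swapAt τ i j i = τ j := by simp [swapAt]

theorem swapAt_apply_right (h : j ≠ i) : swapAt τ i j j = τ i := by simp [swapAt, h]

theorem swapAt_apply_of_ne {w : V} (hi : w ≠ i) (hj : w ≠ j) : swapAt τ i j w = τ w := by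
  simp [swapAt, hi, hj]

end swapAt

theorem Set.ncard_pair_inter_setOf {α : Type*} {a b : α} (hab : a ≠ b) (p : α → Prop)
    [DecidablePred p] :
    ({a, b} ∩ {w | p w} : Set α).ncard = (if p a then 1 else 0) + (if p b then 1 else 0) := by
  classical
  have : ({a, b} ∩ {w | p w} : Set α) = (({a, b} : Finset α).filter p : Set α) := by
    ext; simp
  rw [this, Set.ncard_coe_finset, Finset.card_filter, Finset.sum_pair hab]

theorem Bool.eq_of_ne_of_ne {a b c : Bool} (ha : a ≠ c) (hb : b ≠ c) : a = b := by
  cases a <;> cases b <;> cases c <;> simp_all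

theorem Fin.exists_not_and_add_one_of_not_add_one {n : ℕ} [NeZero n] {p : Fin n → Prop}
    {u v : Fin n} (huv : u ≠ v) (hu : p u) (hv : ¬ p (v + 1)) :
    ∃ j, ¬ p j ∧ p (j + 1) ∧ j + 1 ≠ v := by
  have hpos : 1 ≤ (u - v).val := Nat.pos_of_ne_zero (by simpa [Fin.val_eq_zero_iff, sub_eq_zero])
  obtain ⟨k, -, hkd, hk, hk'⟩ := Nat.exists_not_and_succ_of_le (p := fun k : ℕ => p (v + k))
    hpos (by simpa using hv) (by simpa using hu)
  refine ⟨v + k, hk, by simpa [add_assoc] using hk', ?_⟩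
  rw [add_assoc, Ne, add_eq_left, ← Nat.cast_add_one]
  exact Fin.natCast_ne_zero_of_pos_of_lt k.succ_pos (by omega)

namespace cycleG

variable {n : ℕ} [NeZero n]

theorem adj_iff (hn : 2 ≤ n) {u w : Fin n} : (cycleG n).Adj u w ↔ w = u + 1 ∨ w = u - 1 := by
  have val_add_one (a : Fin n) : (a + 1).val = (a.val + 1) % n := by
    rw [Fin.val_add, Fin.val_one', Nat.add_mod_mod]
  have add_one_ne (a : Fin n) : a + 1 ≠ a := by
    simpa using Fin.natCast_ne_zero_of_pos_of_lt (n := n) one_pos (by omega)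
  have hval (a b : Fin n) : (a.val + 1) % n = b.val ↔ b = a + 1 := by
    rw [Fin.ext_iff, val_add_one, eq_comm]
  simp only [cycleG, hval]
  constructor
  · rintro ⟨-, h | h⟩
    exacts [.inl h, .inr (eq_sub_of_add_eq h.symm)]
  · rintro (rfl | rfl)
    · exact ⟨fun h => add_one_ne u h.symm, .inl rfl⟩
    · exact ⟨fun h => add_one_ne (u - 1) (by rw [sub_add_cancel]; exact h),
        .inr (sub_add_cancel u 1).symm⟩

theorem neighborSet_eq (hn : 2 ≤ n) (v : Fin n) : (cycleG n).neighborSet v = {v + 1, v - 1} := by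
  ext w; simp [adj_iff hn]

variable {τ : Fin n → Bool} {v : Fin n}

theorem utility_eq (hn : 3 ≤ n) :
    utility (cycleG n) τ v =
      ((if τ (v + 1) = τ v then 1 else 0) + (if τ (v - 1) = τ v then 1 else 0)) / 2 := by
  have hne : v + 1 ≠ v - 1 := by
    intro h
    apply Fin.natCast_ne_zero_of_pos_of_lt (n := n) two_pos (by omega)
    rw [← sub_eq_zero] at h; push_cast; rw [← h]; ring
  have hnbhd := neighborSet_eq (by omega) v
  rw [utility, if_neg (by rw [hnbhd]; exact (Set.insert_nonempty _ _).ne_empty), hnbhd,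
    Set.ncard_pair hne, Set.ncard_pair_inter_setOf hne]
  push_cast
  rfl

theorem profitableSwap_add_one (hn : 3 ≤ n) (hp : τ (v + 1) ≠ τ v) (hm : τ (v - 1) ≠ τ v)
    (h2 : τ (v + 1 + 1) = τ v) (h2v : v + 1 + 1 ≠ v) : ProfitableSwap (cycleG n) τ v (v + 1) := by
  have h1v : v + 1 ≠ v := fun h => hp (congrArg τ h)
  have hm1v : v - 1 ≠ v := fun h => hm (congrArg τ h)
  have h21 : v + 1 + 1 ≠ v + 1 := fun h => hp (h ▸ h2)
  have hm11 : v - 1 ≠ v + 1 := fun h => h2v (by rw [← h, sub_add_cancel])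
  have hmp : τ (v - 1) = τ (v + 1) := Bool.eq_of_ne_of_ne hm hp
  refine ⟨hp.symm, ?_, ?_⟩
  · rw [utility_eq hn, utility_eq hn, add_sub_cancel_right, swapAt_apply_right _ _ _ h1v,
      swapAt_apply_of_ne _ _ _ h2v h21, swapAt_apply_left]
    simp [h2, hp, hm]
  · rw [utility_eq hn, utility_eq hn, add_sub_cancel_right, swapAt_apply_left,
      swapAt_apply_right _ _ _ h1v, swapAt_apply_of_ne _ _ _ hm1v hm11]
    simp [h2, hp.symm, hmp]

theorem profitableSwap_of_not_adj (hn : 3 ≤ n) (hp : τ (v + 1) ≠ τ v) (hm : τ (v - 1) ≠ τ v)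
    {j : Fin n} (hj : τ j ≠ τ v) (hj1 : τ (j + 1) = τ v) (hjv : j + 1 ≠ v) (hvj : v + 1 ≠ j) :
    ProfitableSwap (cycleG n) τ v j := by
  have hjv' : j ≠ v := fun h => hj (congrArg τ h)
  have hj1j : j + 1 ≠ j := fun h => hj (h ▸ hj1)
  have h1v : v + 1 ≠ v := fun h => hp (congrArg τ h)
  have hm1v : v - 1 ≠ v := fun h => hm (congrArg τ h)
  have hm1j : v - 1 ≠ j := fun h => hjv (by rw [← h, sub_add_cancel])
  have hj1j' : τ (j + 1) ≠ τ j := fun h => hj (h ▸ hj1)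
  refine ⟨hj.symm, ?_, ?_⟩
  · rw [utility_eq hn, utility_eq hn, swapAt_apply_right _ _ _ hjv',
      swapAt_apply_of_ne _ _ _ hjv hj1j, hj1, if_pos rfl, if_neg hp, if_neg hm]
    split_ifs <;> norm_num
  · rw [utility_eq hn, utility_eq hn, swapAt_apply_left, swapAt_apply_of_ne _ _ _ h1v hvj,
      swapAt_apply_of_ne _ _ _ hm1v hm1j, Bool.eq_of_ne_of_ne hp hj,
      Bool.eq_of_ne_of_ne hm hj, if_pos rfl, if_neg hj1j']
    split_ifs <;> norm_num

theorem exists_profitableSwap (hn : 3 ≤ n) (hp : τ (v + 1) ≠ τ v) (hm : τ (v - 1) ≠ τ v)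
    {u : Fin n} (huv : u ≠ v) (hu : τ u = τ v) : ∃ i j, ProfitableSwap (cycleG n) τ i j := by
  obtain ⟨j, hj, hj1, hjv⟩ :=
    Fin.exists_not_and_add_one_of_not_add_one (p := fun w => τ w = τ v) huv hu hp
  by_cases hvj : v + 1 = j
  · subst hvj
    exact ⟨v, v + 1, profitableSwap_add_one hn hp hm hj1 hjv⟩
  · exact ⟨v, j, profitableSwap_of_not_adj hn hp hm hj hj1 hjv hvj⟩

end cycleG

/-- On a cycle with at least two agents of each type, in every swap-equilibrium every
agent is adjacent to at least one agent of its own type. -/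
theorem cycle_swapEq_adjacent_friend (n : ℕ) (τ : Fin n → Bool)
    (h1 : 2 ≤ {v : Fin n | τ v = true}.ncard)
    (h2 : 2 ≤ {v : Fin n | τ v = false}.ncard)
    (heq : IsSwapEq (cycleG n) τ) :
    ∀ v : Fin n, ∃ w : Fin n, (cycleG n).Adj v w ∧ τ w = τ v := by
  have hn : 3 ≤ n := by
    have hcompl : {v : Fin n | τ v = true}ᶜ = {v | τ v = false} := by ext; simp
    have := Set.ncard_add_ncard_compl {v : Fin n | τ v = true}
    rw [hcompl, Nat.card_eq_fintype_card, Fintype.card_fin] at this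
    omega
  have : NeZero n := ⟨by omega⟩
  intro v
  by_contra! hlonely
  have hfriends : 1 < {w | τ w = τ v}.ncard := by cases τ v <;> omega
  obtain ⟨u, hu, huv⟩ := Set.exists_ne_of_one_lt_ncard hfriends v
  obtain ⟨i, j, hij⟩ := cycleG.exists_profitableSwap hn
    (hlonely _ ((cycleG.adj_iff (by omega)).mpr (.inl rfl)))
    (hlonely _ ((cycleG.adj_iff (by omega)).mpr (.inr rfl))) huv hu
  exact heq i j hij
end

section
/- For a Schelling game on a path G with |T1| ≥ 4 and |T2| ≥ 2, the assignment v' in which the agents of T1 occupy the first |T1| vertices of the path and the agents of T2 occupy the remaining vertices is a swap-equilibrium, and moreover v' remains a swap-equilibrium on G − S for every subset S of edges and for every subset S of vertices (i.e., v' has edge-robustness |E(G)| and vertex-robustness |V(G)|). -/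
open SimpleGraph

variable {V : Type*}

/-- The path graph on `Fin n` (vertices `0,…,n-1` with consecutive vertices adjacent). -/
def pathG (n : ℕ) : SimpleGraph (Fin n) where
  Adj u v := u.val + 1 = v.val ∨ v.val + 1 = u.val
  symm := ⟨fun u v h => h.symm⟩
  loopless := ⟨by intro u h; rcases h with h | h <;> omega⟩

/-- Deleting a set `S` of vertices: remaining adjacency. -/
def delVerts (H : SimpleGraph V) (S : Set V) : SimpleGraph V where
  Adj u v := H.Adj u v ∧ u ∉ S ∧ v ∉ S
  symm := ⟨fun u v h => ⟨h.1.symm, h.2.2, h.2.1⟩⟩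
  loopless := ⟨fun u h => h.1.ne rfl⟩

/-- Swap-equilibrium after deleting the vertices in `S` (agents on deleted vertices are
removed from the game and cannot take part in swaps). -/
def IsSwapEqDelVerts (H : SimpleGraph V) (τ : V → Bool) (S : Set V) : Prop :=
  ∀ i ∉ S, ∀ j ∉ S, ¬ ProfitableSwap (delVerts H S) τ i j

/-!
An agent who moves to a vertex whose other neighbours all carry the opposite type ends up with
utility `0`, so such a swap is never profitable. In the segregated assignment on any subgraph of
the path, a `T1`-agent on `i < t1` and a `T2`-agent on `j ≥ t1` always include one such vertex:
`j` itself when `j > t1` (all its neighbours are `T2`), and `i` when `j = t1` (its only possible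
`T2`-neighbour is then `j`). Deleting edges or vertices only passes to a subgraph.
-/

section Schelling

variable {H : SimpleGraph V} {τ : V → Bool} {i j : V}

theorem utility_nonneg (H : SimpleGraph V) (τ : V → Bool) (v : V) : 0 ≤ utility H τ v := by
  unfold utility
  split <;> positivity

theorem utility_eq_zero_of_forall_adj_ne {v : V} (h : ∀ w, H.Adj v w → τ w ≠ τ v) :
    utility H τ v = 0 := by
  have hempty : H.neighborSet v ∩ {w | τ w = τ v} = ∅ :=
    Set.eq_empty_of_forall_notMem fun w ⟨hw, hτw⟩ => h w hw hτw
  simp [utility, hempty]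

theorem swapAt_left (τ : V → Bool) (i j : V) : swapAt τ i j i = τ j := by
  simp [swapAt]

theorem swapAt_right (τ : V → Bool) (i j : V) : swapAt τ i j j = τ i := by
  unfold swapAt
  split_ifs <;> simp_all

theorem swapAt_of_ne {v : V} (hi : v ≠ i) (hj : v ≠ j) : swapAt τ i j v = τ v := by
  simp [swapAt, hi, hj]

theorem swapAt_comm (τ : V → Bool) (i j : V) : swapAt τ i j = swapAt τ j i := by
  funext v
  unfold swapAt
  split_ifs <;> simp_all

theorem ProfitableSwap.symm (h : ProfitableSwap H τ i j) : ProfitableSwap H τ j i := by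
  obtain ⟨hne, hi, hj⟩ := h
  rw [swapAt_comm] at hi hj
  exact ⟨hne.symm, hj, hi⟩

theorem not_profitableSwap_of_forall_adj_eq (h : ∀ w, H.Adj i w → w ≠ j → τ w = τ i) :
    ¬ ProfitableSwap H τ i j := by
  rintro ⟨hne, -, hgain⟩
  have hzero : utility H (swapAt τ i j) i = 0 := by
    refine utility_eq_zero_of_forall_adj_ne fun w hw => ?_
    rw [swapAt_left]
    by_cases hwj : w = j
    · rw [hwj, swapAt_right]
      exact hne
    · rw [swapAt_of_ne (H.ne_of_adj hw).symm hwj, h w hw hwj]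
      exact hne
  linarith [utility_nonneg H τ j]

theorem delVerts_le (H : SimpleGraph V) (S : Set V) : delVerts H S ≤ H :=
  fun _ _ h => h.1

end Schelling

theorem isSwapEq_of_le_pathG {n t : ℕ} {H : SimpleGraph (Fin n)} (hH : H ≤ pathG n)
    {τ : Fin n → Bool} (hτ : ∀ v : Fin n, τ v = decide (v.val < t)) : IsSwapEq H τ := by
  have across : ∀ i j : Fin n, i.val < t → t ≤ j.val → ¬ ProfitableSwap H τ i j := by
    intro i j hi hj
    rcases hj.eq_or_lt with hjt | hjt
    · refine not_profitableSwap_of_forall_adj_eq fun w hw hwj => ?_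
      have hw' : i.val + 1 = w.val ∨ w.val + 1 = i.val := hH hw
      have : w.val ≠ j.val := Fin.val_ne_of_ne hwj
      simp only [hτ, decide_eq_decide]
      omega
    · refine fun h => not_profitableSwap_of_forall_adj_eq (fun w hw _ => ?_) h.symm
      have hw' : j.val + 1 = w.val ∨ w.val + 1 = j.val := hH hw
      simp only [hτ, decide_eq_decide]
      omega
  intro i j h
  have hne := h.1
  simp only [hτ, ne_eq, decide_eq_decide] at hne
  rcases lt_or_ge i.val t with hi | hi
  · exact across i j hi (by omega) h
  · exact across j i (by omega) hi h.symm

theorem path_segregated_fully_robust_general (n t1 : ℕ)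
    (τ : Fin n → Bool) (hτ : ∀ v : Fin n, τ v = decide (v.val < t1)) :
    IsSwapEq (pathG n) τ ∧
    (∀ S : Set (Sym2 (Fin n)), IsSwapEq ((pathG n).deleteEdges S) τ) ∧
    (∀ S : Set (Fin n), IsSwapEqDelVerts (pathG n) τ S) :=
  ⟨isSwapEq_of_le_pathG le_rfl hτ,
    fun S => isSwapEq_of_le_pathG (deleteEdges_le S) hτ,
    fun S i _ j _ => isSwapEq_of_le_pathG (delVerts_le _ S) hτ i j⟩

/-- On a path with `|T1| ≥ 4` and `|T2| ≥ 2`, the assignment where the agents of `T1`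
occupy the first `|T1|` vertices and the agents of `T2` the remaining vertices is a
swap-equilibrium, and it remains one after deleting any subset of edges and any subset of
vertices (edge-robustness `|E(G)|`, vertex-robustness `|V(G)|`). -/
theorem path_segregated_fully_robust (n t1 t2 : ℕ)
    (hn : n = t1 + t2) (h1 : 4 ≤ t1) (h2 : 2 ≤ t2)
    (τ : Fin n → Bool) (hτ : ∀ v : Fin n, τ v = decide (v.val < t1)) :
    IsSwapEq (pathG n) τ ∧
    (∀ S : Set (Sym2 (Fin n)), IsSwapEq ((pathG n).deleteEdges S) τ) ∧
    (∀ S : Set (Fin n), IsSwapEqDelVerts (pathG n) τ S) :=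
  path_segregated_fully_robust_general n t1 τ hτ
end
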